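/- Let H be a complex Hilbert space and (x_n)_{n∈ℕ} a sequence in H. Then (x_n) is a frame for H if and only if there exist a complex Hilbert space K, a linear isometry V : H → K, and a Riesz basis (v_n)_{n∈ℕ} of K such that x_n = V*(v_n) for all n, where V* denotes the Hilbert-space adjoint of V (i.e., identifying H with V(H), each x_n is the orthogonal compression of v_n onto H). -/

import Mathlib

universe u

/-- A sequence `(xₙ)` in a complex Hilbert space is a frame if there are constants
`0 < A ≤ B < ∞` with `A‖v‖² ≤ ∑ₙ |⟨v, xₙ⟩|² ≤ B‖v‖²` for all `v`. -/
def IsFrame {H : Type u} [NormedAddCommGroup H] [InnerProductSpace ℂ H]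
    (x : ℕ → H) : Prop :=
  ∃ A B : ℝ, 0 < A ∧ A ≤ B ∧ ∀ v : H,
    Summable (fun n : ℕ => ‖(inner ℂ v (x n) : ℂ)‖ ^ 2) ∧
    A * ‖v‖ ^ 2 ≤ ∑' n : ℕ, ‖(inner ℂ v (x n) : ℂ)‖ ^ 2 ∧
    ∑' n : ℕ, ‖(inner ℂ v (x n) : ℂ)‖ ^ 2 ≤ B * ‖v‖ ^ 2

/-!
If `(xₙ)` is a frame, its analysis operator `Θ : H → ℓ²`, `Θ v = (⟪xₙ, v⟫)ₙ`, is bounded below,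
so `Θ†Θ` is invertible and `Θ†` maps onto `H`. Hence `g ↦ (Θ† g, P g)`, with `P` the orthogonal
projection onto `(range Θ)ᗮ`, is an isomorphism of `ℓ²` onto `K = H ⊕ (range Θ)ᗮ`. It carries the
unit vectors `δₙ` to a Riesz basis of `K` whose `H`-components are `Θ† δₙ = xₙ`, and the adjoint
of the inclusion `H → K` is the projection onto that component. Gram–Schmidt applied to this Riesz
basis gives the orthonormal basis of `K` indexed by `ℕ`.

Conversely, if `xₙ = L eₙ` with `(eₙ)` orthonormal and `L = V† T`, Parseval gives
`∑ₙ |⟪v, xₙ⟫|² = ‖L† v‖² = ‖T† V v‖²`, which is comparable to `‖v‖²` since `V` is isometric and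
`T†` is invertible.
-/

open Submodule
open scoped InnerProductSpace NNReal lp

section General

variable {𝕜 : Type*} [RCLike 𝕜]
variable {E F : Type*} [NormedAddCommGroup E] [InnerProductSpace 𝕜 E]
  [NormedAddCommGroup F] [InnerProductSpace 𝕜 F]

theorem lp.hasSum_norm_sq {ι : Type*} {G : ι → Type*} [∀ i, NormedAddCommGroup (G i)]
    (f : lp G 2) : HasSum (fun i => ‖f i‖ ^ 2) (‖f‖ ^ 2) := by
  simpa using lp.hasSum_norm (p := 2) (by norm_num) f

namespace HilbertBasis

variable {ι : Type*}

theorem hasSum_norm_inner_sq (b : HilbertBasis ι 𝕜 E) (v : E) :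
    HasSum (fun i => ‖⟪v, b i⟫_𝕜‖ ^ 2) (‖v‖ ^ 2) := by
  simpa [b.repr_apply_apply, norm_inner_symm] using lp.hasSum_norm_sq (b.repr v)

theorem hasSum_norm_inner_map_sq [CompleteSpace E] [CompleteSpace F]
    (b : HilbertBasis ι 𝕜 E) (L : E →L[𝕜] F) (v : F) :
    HasSum (fun i => ‖⟪v, L (b i)⟫_𝕜‖ ^ 2) (‖L.adjoint v‖ ^ 2) := by
  simpa [← ContinuousLinearMap.adjoint_inner_left] using b.hasSum_norm_inner_sq (L.adjoint v)

theorem nonempty_of_linearIndependent [CompleteSpace E] {f : ℕ → E}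
    (hf : LinearIndependent 𝕜 f) (hd : (span 𝕜 (Set.range f)).topologicalClosure = ⊤) :
    Nonempty (HilbertBasis ℕ 𝕜 E) := by
  refine ⟨HilbertBasis.mk (InnerProductSpace.gramSchmidtNormed_orthonormal hf) ?_⟩
  rw [InnerProductSpace.span_gramSchmidtNormed_range, InnerProductSpace.span_gramSchmidt, hd]

theorem nonempty_of_continuousLinearEquiv [CompleteSpace F] (b : HilbertBasis ℕ 𝕜 E)
    (W : E ≃L[𝕜] F) : Nonempty (HilbertBasis ℕ 𝕜 F) := by
  refine nonempty_of_linearIndependent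
    (b.orthonormal.linearIndependent.map' W.toLinearMap W.toLinearEquiv.ker) ?_
  rw [← dense_iff_topologicalClosure_eq_top, Set.range_comp, ← LinearMap.map_span]
  exact W.surjective.denseRange.dense_image W.continuous
    (dense_iff_topologicalClosure_eq_top.mpr b.dense_span)

end HilbertBasis

theorem ContinuousLinearMap.adjoint_surjective_of_le_norm_sq [CompleteSpace E] [CompleteSpace F]
    (Θ : E →L[𝕜] F) {c : ℝ≥0} (hc : 0 < c) (h : ∀ v, c * ‖v‖ ^ 2 ≤ ‖Θ v‖ ^ 2) :
    Function.Surjective Θ.adjoint := by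
  have hS : IsUnit (Θ.adjoint ∘L Θ) := by
    refine (Θ.adjoint ∘L Θ).isUnit_of_forall_le_norm_inner_map hc fun v => ?_
    rw [comp_apply, adjoint_inner_left, inner_self_eq_norm_sq_to_K]
    simpa [mul_comm] using h v
  have hbij := ContinuousLinearMap.isUnit_iff_bijective.mp hS
  rw [coe_comp] at hbij
  exact hbij.2.of_comp

theorem ContinuousLinearEquiv.antilipschitz_adjoint [CompleteSpace E] [CompleteSpace F]
    (T : E ≃L[𝕜] F) :
    AntilipschitzWith ‖(T.symm : F →L[𝕜] E).adjoint‖₊ (T : E →L[𝕜] F).adjoint := by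
  refine (T.symm : F →L[𝕜] E).adjoint.lipschitz.to_rightInverse fun z => ?_
  rw [← ContinuousLinearMap.comp_apply, ← ContinuousLinearMap.adjoint_comp]
  simp [ContinuousLinearMap.adjoint_id]

namespace WithLp

noncomputable def linearIsometryInl : E →ₗᵢ[𝕜] WithLp 2 (E × F) where
  toLinearMap := (WithLp.linearEquiv 2 𝕜 (E × F)).symm.toLinearMap ∘ₗ LinearMap.inl 𝕜 E F
  norm_map' v := by simp

theorem adjoint_linearIsometryInl_apply [CompleteSpace E] [CompleteSpace F]
    (z : WithLp 2 (E × F)) :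
    (linearIsometryInl : E →ₗᵢ[𝕜] WithLp 2 (E × F)).toContinuousLinearMap.adjoint z = z.fst := by
  refine ext_inner_left 𝕜 fun v => ?_
  simp [ContinuousLinearMap.adjoint_inner_right, linearIsometryInl]

end WithLp

section AnalysisOperator

variable {ι : Type*} (x : ι → E) {B : ℝ}
  (hx : ∀ v, Summable (fun i => ‖⟪v, x i⟫_𝕜‖ ^ 2) ∧ ∑' i, ‖⟪v, x i⟫_𝕜‖ ^ 2 ≤ B * ‖v‖ ^ 2)

noncomputable def analysisOperator : E →L[𝕜] ℓ²(ι, 𝕜) :=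
  LinearMap.mkContinuous
    { toFun v := ⟨fun i => ⟪x i, v⟫_𝕜, (memℓp_gen_iff (by norm_num)).2 (by
        simpa [norm_inner_symm] using (hx v).1)⟩
      map_add' v w := by ext i; exact inner_add_right _ _ _
      map_smul' c v := by ext; simp [inner_smul_right] }
    (Real.sqrt B) fun v => by
      refine (Real.le_sqrt_of_sq_le (y := B * ‖v‖ ^ 2) ?_).trans_eq ?_
      · rw [← (lp.hasSum_norm_sq _).tsum_eq]
        simpa [norm_inner_symm] using (hx v).2
      · rw [Real.sqrt_mul' _ (sq_nonneg _), Real.sqrt_sq (norm_nonneg _)]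

@[simp]
theorem analysisOperator_apply (v : E) (i : ι) : analysisOperator x hx v i = ⟪x i, v⟫_𝕜 := rfl

theorem hasSum_norm_inner_analysisOperator (v : E) :
    HasSum (fun i => ‖⟪v, x i⟫_𝕜‖ ^ 2) (‖analysisOperator x hx v‖ ^ 2) := by
  simpa [norm_inner_symm] using lp.hasSum_norm_sq (analysisOperator x hx v)

theorem adjoint_analysisOperator_single [CompleteSpace E] [DecidableEq ι] (i : ι) :
    (analysisOperator x hx).adjoint (lp.single 2 i 1) = x i := by
  refine ext_inner_left 𝕜 fun v => ?_
  simp [ContinuousLinearMap.adjoint_inner_right, lp.inner_single_right]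

end AnalysisOperator

namespace ContinuousLinearMap

variable [CompleteSpace E] [CompleteSpace F] (Θ : E →L[𝕜] F)

noncomputable def dilationMap : F →L[𝕜] WithLp 2 (E × Θ.rangeᗮ) :=
  (WithLp.prodContinuousLinearEquiv 2 𝕜 E Θ.rangeᗮ).symm.toContinuousLinearMap ∘L
    Θ.adjoint.prod Θ.rangeᗮ.orthogonalProjectionOnto

@[simp]
theorem dilationMap_fst (g : F) : (Θ.dilationMap g).fst = Θ.adjoint g := rfl

theorem dilationMap_bijective (h : Function.Surjective Θ.adjoint) :
    Function.Bijective Θ.dilationMap := by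
  have hker : ∀ g ∈ Θ.rangeᗮ, Θ.adjoint g = 0 := fun g hg => by
    rwa [Θ.orthogonal_range] at hg
  set P := Θ.rangeᗮ.orthogonalProjectionOnto
  constructor
  · refine (injective_iff_map_eq_zero _).mpr fun g hg => ?_
    have hg' : g ∈ Θ.rangeᗮ := by
      rw [Θ.orthogonal_range]
      simpa using congrArg WithLp.fst hg
    have hP : P g = 0 := congrArg WithLp.snd hg
    rw [orthogonalProjectionOnto_eq_zero_iff] at hP
    exact (Submodule.orthogonal_disjoint _).le_bot ⟨hg', hP⟩
  · intro z
    obtain ⟨g, hg⟩ := h z.fst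
    refine ⟨g - P g + z.snd, WithLp.ofLp_injective 2 (Prod.ext ?_ ?_)⟩
    · simp [hg, hker _ (P g).2, hker _ z.snd.2]
    · change P (g - P g + z.snd) = z.snd
      rw [map_add, map_sub, orthogonalProjectionOnto_mem_subspace_eq_self,
        orthogonalProjectionOnto_mem_subspace_eq_self, sub_self, zero_add]

noncomputable def dilationEquiv (h : Function.Surjective Θ.adjoint) :
    F ≃L[𝕜] WithLp 2 (E × Θ.rangeᗮ) :=
  .ofBijective Θ.dilationMap (LinearMap.ker_eq_bot.mpr (Θ.dilationMap_bijective h).1)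
    (LinearMap.range_eq_top.mpr (Θ.dilationMap_bijective h).2)

@[simp]
theorem dilationEquiv_apply (h : Function.Surjective Θ.adjoint) (g : F) :
    Θ.dilationEquiv h g = Θ.dilationMap g := rfl

end ContinuousLinearMap

end General

section Frame

variable {H K : Type*} [NormedAddCommGroup H] [InnerProductSpace ℂ H]
  [NormedAddCommGroup K] [InnerProductSpace ℂ K]

theorem isFrame_of_hasSum_norm_sq {x : ℕ → H} (M : H →L[ℂ] K) {k : ℝ≥0}
    (hM : AntilipschitzWith k M) (hx : ∀ v, HasSum (fun n => ‖⟪v, x n⟫_ℂ‖ ^ 2) (‖M v‖ ^ 2)) :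
    IsFrame x := by
  -- `k + 1` rather than `k`: the lower bound must stay positive when `k = 0`.
  refine ⟨((k : ℝ) + 1)⁻¹ ^ 2, max (((k : ℝ) + 1)⁻¹ ^ 2) (‖M‖ ^ 2), by positivity,
    le_max_left _ _, fun v => ⟨(hx v).summable, ?_, ?_⟩⟩ <;> rw [(hx v).tsum_eq]
  · have hlow : ‖v‖ ≤ (k + 1) * ‖M v‖ :=
      (M.bound_of_antilipschitz hM v).trans (by gcongr; simp)
    rw [inv_pow, inv_mul_le_iff₀ (by positivity), ← mul_pow]
    exact pow_le_pow_left₀ (norm_nonneg _) hlow 2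
  · calc ‖M v‖ ^ 2 ≤ (‖M‖ * ‖v‖) ^ 2 := pow_le_pow_left₀ (norm_nonneg _) (M.le_opNorm v) 2
      _ = ‖M‖ ^ 2 * ‖v‖ ^ 2 := mul_pow ..
      _ ≤ _ := by gcongr; exact le_max_right _ _

variable [CompleteSpace H] [CompleteSpace K]

theorem isFrame_map_hilbertBasis (e : HilbertBasis ℕ ℂ K) (L : K →L[ℂ] H) {k : ℝ≥0}
    (hL : AntilipschitzWith k L.adjoint) : IsFrame fun n => L (e n) :=
  isFrame_of_hasSum_norm_sq L.adjoint hL (e.hasSum_norm_inner_map_sq L)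

theorem isFrame_adjoint_map_hilbertBasis (V : H →ₗᵢ[ℂ] K) (e : HilbertBasis ℕ ℂ K)
    (T : K ≃L[ℂ] K) : IsFrame fun n => V.toContinuousLinearMap.adjoint (T (e n)) := by
  obtain ⟨k, hk⟩ : ∃ k, AntilipschitzWith k
      (V.toContinuousLinearMap.adjoint ∘L (T : K →L[ℂ] K)).adjoint := by
    rw [ContinuousLinearMap.adjoint_comp, ContinuousLinearMap.adjoint_adjoint]
    exact ⟨_, T.antilipschitz_adjoint.comp V.antilipschitz⟩
  have h := isFrame_map_hilbertBasis e _ hk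
  simp only [ContinuousLinearMap.comp_apply, ContinuousLinearEquiv.coe_coe] at h
  exact h

end Frame

/-- **Dilation characterization of frames** (Han–Larson).
A sequence `(xₙ)` in a complex Hilbert space `H` is a frame if and only if
there exist a complex Hilbert space `K`, a linear isometry `V : H → K` and a
Riesz basis `(vₙ) = (T eₙ)` of `K` (with `(eₙ)` an orthonormal basis of `K` and
`T` an invertible bounded operator on `K`) such that `xₙ = V* vₙ` for all `n`. -/
theorem frame_iff_riesz_basis_dilation
    {H : Type u} [NormedAddCommGroup H] [InnerProductSpace ℂ H] [CompleteSpace H]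
    (x : ℕ → H) :
    IsFrame x ↔
      ∃ (K : Type u) (_ : NormedAddCommGroup K) (_ : InnerProductSpace ℂ K)
        (_ : CompleteSpace K) (V : H →ₗᵢ[ℂ] K) (e : HilbertBasis ℕ ℂ K) (T : K ≃L[ℂ] K),
        ∀ n : ℕ, (ContinuousLinearMap.adjoint V.toContinuousLinearMap) (T (e n)) = x n := by
  refine ⟨fun hx => ?_, fun ⟨K, _, _, _, V, e, T, hT⟩ => funext hT ▸
    isFrame_adjoint_map_hilbertBasis V e T⟩
  obtain ⟨A, B, hA, -, hx⟩ := hx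
  set Θ := analysisOperator x fun v => ⟨(hx v).1, (hx v).2.2⟩
  have hΘ : ∀ v, (⟨A, hA.le⟩ : ℝ≥0) * ‖v‖ ^ 2 ≤ ‖Θ v‖ ^ 2 := fun v =>
    (hasSum_norm_inner_analysisOperator (𝕜 := ℂ) x _ v).tsum_eq ▸ (hx v).2.1
  set W := Θ.dilationEquiv (Θ.adjoint_surjective_of_le_norm_sq hA hΘ)
  obtain ⟨e⟩ := (default : HilbertBasis ℕ ℂ ℓ²(ℕ, ℂ)).nonempty_of_continuousLinearEquiv W
  refine ⟨WithLp 2 (H × Θ.rangeᗮ), inferInstance, inferInstance, inferInstance,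
    WithLp.linearIsometryInl, e,
    e.repr.toContinuousLinearEquiv.trans W, fun n => ?_⟩
  simpa [W, WithLp.adjoint_linearIsometryInl_apply, e.repr_self] using
    adjoint_analysisOperator_single x _ n
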